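/- Let p be an odd prime and let ζ ∈ ℂ be a primitive p-th root of unity. Then ∑_{j=1}^{p-1} 1/((1-ζ^j)(1-ζ^{-j})) = (p²-1)/12. (Equivalently, the holomorphic Lefschetz coefficient a_{p-1} = (1/(p-1))·∑_{j=1}^{p-1} 1/((1-ζ^j)(1-ζ^{(p-1)j})) equals (p+1)/12.) -/

import Mathlib

/-!
For `w ^ n = 1`, `w ≠ 1`, telescoping gives `(1 - w)⁻¹ = -(1/n) ∑_{k<n} k w^k`, so each summand is
`S(ζ^j) S(ζ^{-j}) / n²` with `S(w) = ∑_{k<n} k w^k`. Summed over all `j < n`, orthogonality of the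
characters `j ↦ ζ^{jk}` (discrete Parseval) gives `n ∑ k²`; removing the `j = 0` term `(∑ k)²`
leaves `(n ∑ k² - (∑ k)²) / n² = (n² - 1) / 12`.
-/

open Finset

theorem one_sub_mul_sum_range_natCast_mul_pow {R : Type*} [CommRing R] (w : R) (n : ℕ) :
    (1 - w) * ∑ k ∈ range n, (k : R) * w ^ k = w * ∑ k ∈ range n, w ^ k - n * w ^ n := by
  induction n with
  | zero => simp
  | succ n ih => rw [sum_range_succ, mul_add, ih, sum_range_succ]; push_cast; ring

section Field

variable {K : Type*} [Field K]

theorem inv_one_sub_eq_neg_sum_range_natCast_mul_pow_div {n : ℕ} {w : K} (hw : w ^ n = 1)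
    (hw1 : w ≠ 1) (hn : (n : K) ≠ 0) :
    (1 - w)⁻¹ = -(∑ k ∈ range n, (k : K) * w ^ k) / n := by
  have hgeom : ∑ k ∈ range n, w ^ k = 0 := by rw [geom_sum_eq hw1, hw, sub_self, zero_div]
  have key := one_sub_mul_sum_range_natCast_mul_pow w n
  rw [hgeom, hw, mul_zero, mul_one, zero_sub] at key
  have hne : 1 - w ≠ 0 := sub_ne_zero.2 hw1.symm
  field_simp
  linear_combination key

theorem sum_range_natCast [CharZero K] (n : ℕ) : ∑ k ∈ range n, (k : K) = n * (n - 1) / 2 := by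
  induction n with
  | zero => simp
  | succ n ih => rw [sum_range_succ, ih]; push_cast; ring

theorem sum_range_natCast_sq [CharZero K] (n : ℕ) :
    ∑ k ∈ range n, (k : K) ^ 2 = n * (n - 1) * (2 * n - 1) / 6 := by
  induction n with
  | zero => simp
  | succ n ih => rw [sum_range_succ, ih]; push_cast; ring

namespace IsPrimitiveRoot

variable {ζ : K} {n : ℕ}

theorem sum_pow_mul_inv_pow_eq_ite (hζ : IsPrimitiveRoot ζ n) {k l : ℕ} (hk : k < n)
    (hl : l < n) :
    ∑ j ∈ range n, (ζ ^ j) ^ k * ((ζ ^ j)⁻¹) ^ l = if k = l then (n : K) else 0 := by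
  have hζ0 : ζ ≠ 0 := hζ.ne_zero (by omega)
  set u := ζ ^ k * (ζ ^ l)⁻¹
  have hu : ∀ j, (ζ ^ j) ^ k * ((ζ ^ j)⁻¹) ^ l = u ^ j := fun j => by ring
  simp only [hu]
  split_ifs with hkl
  · simp [u, hkl, hζ0]
  · have hu1 : u ≠ 1 := fun h =>
      hkl (hζ.pow_inj hk hl (by simpa [u, mul_inv_eq_one₀ (pow_ne_zero l hζ0)] using h))
    have hun : u ^ n = 1 := by
      rw [mul_pow, inv_pow, pow_right_comm, hζ.pow_eq_one, pow_right_comm, hζ.pow_eq_one,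
        one_pow, one_pow, inv_one, one_mul]
    rw [geom_sum_eq hu1, hun, sub_self, zero_div]

theorem sum_range_mul_sum_range_inv_pow (hζ : IsPrimitiveRoot ζ n) (a : ℕ → K) :
    ∑ j ∈ range n, (∑ k ∈ range n, a k * (ζ ^ j) ^ k) * ∑ l ∈ range n, a l * ((ζ ^ j)⁻¹) ^ l =
      n * ∑ k ∈ range n, a k ^ 2 := by
  calc _ = ∑ k ∈ range n, ∑ l ∈ range n,
          a k * a l * ∑ j ∈ range n, (ζ ^ j) ^ k * ((ζ ^ j)⁻¹) ^ l := by
        simp_rw [sum_mul_sum, mul_sum]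
        rw [sum_comm]
        refine sum_congr rfl fun k _ => ?_
        rw [sum_comm]
        refine sum_congr rfl fun l _ => sum_congr rfl fun j _ => ?_
        ring
    _ = ∑ k ∈ range n, n * a k ^ 2 := by
        refine sum_congr rfl fun k hk => ?_
        rw [sum_congr rfl fun l hl => by
          rw [hζ.sum_pow_mul_inv_pow_eq_ite (mem_range.1 hk) (mem_range.1 hl)]]
        simp only [mul_ite, mul_zero, sum_ite_eq, hk, ↓reduceIte]
        ring
    _ = _ := (mul_sum ..).symm

theorem sum_inv_one_sub_pow_mul_one_sub_inv_pow [CharZero K] (hζ : IsPrimitiveRoot ζ n)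
    (hn : n ≠ 0) :
    ∑ j ∈ Icc 1 (n - 1), 1 / ((1 - ζ ^ j) * (1 - (ζ ^ j)⁻¹)) = ((n : K) ^ 2 - 1) / 12 := by
  have hnK : (n : K) ≠ 0 := Nat.cast_ne_zero.2 hn
  set S : K → K := fun w => ∑ k ∈ range n, (k : K) * w ^ k
  have hterm : ∀ j ∈ Icc 1 (n - 1),
      1 / ((1 - ζ ^ j) * (1 - (ζ ^ j)⁻¹)) = S (ζ ^ j) * S (ζ ^ j)⁻¹ / n ^ 2 := by
    intro j hj
    obtain ⟨hj1, hjn⟩ := mem_Icc.1 hj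
    have hw1 : ζ ^ j ≠ 1 := hζ.pow_ne_one_of_pos_of_lt (by omega) (by omega)
    have hw : (ζ ^ j) ^ n = 1 := by rw [pow_right_comm, hζ.pow_eq_one, one_pow]
    rw [one_div, mul_inv, inv_one_sub_eq_neg_sum_range_natCast_mul_pow_div hw hw1 hnK,
      inv_one_sub_eq_neg_sum_range_natCast_mul_pow_div (by rw [inv_pow, hw, inv_one])
        (inv_ne_one.2 hw1) hnK]
    ring
  have hsplit (f : ℕ → K) : ∑ j ∈ range n, f j = f 0 + ∑ j ∈ Icc 1 (n - 1), f j := by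
    rw [show range n = insert 0 (Icc 1 (n - 1)) by
      ext; simp only [mem_range, mem_insert, mem_Icc]; omega, sum_insert (by simp)]
  have hparseval := hζ.sum_range_mul_sum_range_inv_pow Nat.cast
  rw [hsplit] at hparseval
  simp only [pow_zero, inv_one, one_pow, mul_one, sum_range_natCast, sum_range_natCast_sq]
    at hparseval
  rw [sum_congr rfl hterm, ← sum_div, eq_sub_of_add_eq' hparseval]
  field_simp
  ring

end IsPrimitiveRoot
end Field

theorem sum_inv_one_sub_zeta_mul_one_sub_zeta_inv_general (p : ℕ) (hp : p.Prime)
    (ζ : ℂ) (hζ : IsPrimitiveRoot ζ p) :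
    ∑ j ∈ Finset.Icc 1 (p - 1), 1 / ((1 - ζ ^ j) * (1 - (ζ ^ j)⁻¹)) =
      ((p : ℂ) ^ 2 - 1) / 12 :=
  hζ.sum_inv_one_sub_pow_mul_one_sub_inv_pow hp.ne_zero

/-- For an odd prime `p` and a primitive `p`-th root of unity `ζ ∈ ℂ`,
`∑_{j=1}^{p-1} 1/((1-ζ^j)(1-ζ^{-j})) = (p²-1)/12`. -/
theorem sum_inv_one_sub_zeta_mul_one_sub_zeta_inv (p : ℕ) (hp : p.Prime) (hodd : Odd p)
    (ζ : ℂ) (hζ : IsPrimitiveRoot ζ p) :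
    ∑ j ∈ Finset.Icc 1 (p - 1), 1 / ((1 - ζ ^ j) * (1 - (ζ ^ j)⁻¹)) =
      ((p : ℂ) ^ 2 - 1) / 12 :=
  sum_inv_one_sub_zeta_mul_one_sub_zeta_inv_general p hp ζ hζ
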